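/- Let x₁,…,xₙ ∈ ℝᵈ satisfy the ℓ₂² triangle inequalities and let M be the difference matrix with columns {xᵢ−xⱼ}_{i<j}. Define P = Σ_{k<l} (|v_{kl}|/‖v‖₁)(xₖ−xₗ)(xₖ−xₗ)ᵀ where v is the top right singular vector of M. Then Σ_{i<j} ‖P^{1/2}(xᵢ−xⱼ)‖ ≥ σ₁(M)² = (1/sr(M)) Σ_{i<j} ‖xᵢ−xⱼ‖². -/

import Mathlib

/-!
Since `M v = σ u` and `uᵀ M = σ vᵀ`, the vector `v` is an eigenvector of the Gram matrix `MᵀM`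
with eigenvalue `σ²`: writing `c_q` for the columns of `M`, `σ² v_q = Σ_l v_l ⟨c_l, c_q⟩`.
Cauchy–Schwarz with the weights `|v_l|` gives
`σ⁴ v_q² ≤ ‖v‖₁ Σ_l |v_l| ⟨c_l, c_q⟩² = ‖v‖₁² ⟨c_q, P c_q⟩ = ‖v‖₁² ‖P^{1/2} c_q‖²`,
so `‖P^{1/2} c_q‖ ≥ σ² |v_q| / ‖v‖₁`, and summing over `q` gives `σ²`.
In `σ² = ‖M‖_F² / sr(M)` division by zero is harmless: `σ ≠ 0` forces `M ≠ 0`, and for `σ = 0`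
both sides vanish.
-/

open Matrix

open scoped ComplexOrder in
noncomputable def Matrix.PosSemidef.sqrt {n : Type*} [Fintype n] [DecidableEq n] {𝕜 : Type*}
    [RCLike 𝕜] {A : Matrix n n 𝕜} (hA : A.PosSemidef) : Matrix n n 𝕜 :=
  hA.1.eigenvectorUnitary.1 * diagonal ((↑) ∘ (√·) ∘ hA.1.eigenvalues) *
    (star hA.1.eigenvectorUnitary : Matrix n n 𝕜)

open scoped ComplexOrder in
theorem Matrix.PosSemidef.sqrt_isHermitian {n : Type*} [Fintype n] [DecidableEq n] {𝕜 : Type*}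
    [RCLike 𝕜] {A : Matrix n n 𝕜} (hA : A.PosSemidef) : hA.sqrt.IsHermitian := by
  unfold Matrix.PosSemidef.sqrt
  rw [show (star hA.1.eigenvectorUnitary : Matrix n n 𝕜) = (hA.1.eigenvectorUnitary.1)ᴴ from rfl]
  refine isHermitian_mul_mul_conjTranspose _ (isHermitian_diagonal_of_self_adjoint _ ?_)
  ext i
  simp [Function.comp_apply]

open scoped ComplexOrder in
theorem Matrix.PosSemidef.sqrt_mul_self {n : Type*} [Fintype n] [DecidableEq n] {𝕜 : Type*}
    [RCLike 𝕜] {A : Matrix n n 𝕜} (hA : A.PosSemidef) : hA.sqrt * hA.sqrt = A := by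
  unfold Matrix.PosSemidef.sqrt
  conv_rhs => rw [hA.1.spectral_theorem, Unitary.conjStarAlgAut_apply]
  have hU : (star hA.1.eigenvectorUnitary : Matrix n n 𝕜) * hA.1.eigenvectorUnitary.1 = 1 :=
    Unitary.coe_star_mul_self _
  calc _ = hA.1.eigenvectorUnitary.1 * diagonal ((↑) ∘ (√·) ∘ hA.1.eigenvalues) *
        ((star hA.1.eigenvectorUnitary : Matrix n n 𝕜) * hA.1.eigenvectorUnitary.1) *
        diagonal ((↑) ∘ (√·) ∘ hA.1.eigenvalues) *
        (star hA.1.eigenvectorUnitary : Matrix n n 𝕜) := by simp only [Matrix.mul_assoc]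
    _ = _ := by
      rw [hU, Matrix.mul_one, Matrix.mul_assoc _ (diagonal _) (diagonal _), diagonal_mul_diagonal]
      congr 3
      funext i
      simp only [Function.comp_apply, ← RCLike.ofReal_mul,
        Real.mul_self_sqrt (hA.eigenvalues_nonneg i)]

theorem Matrix.PosSemidef.sqrt_mulVec_dotProduct_self {n : Type*} [Fintype n] [DecidableEq n]
    {A : Matrix n n ℝ} (hA : A.PosSemidef) (y : n → ℝ) :
    hA.sqrt *ᵥ y ⬝ᵥ hA.sqrt *ᵥ y = y ⬝ᵥ A *ᵥ y := by
  have hsymm : hA.sqrtᵀ = hA.sqrt := hA.sqrt_isHermitian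
  rw [dotProduct_mulVec, ← mulVec_transpose, hsymm, mulVec_mulVec, hA.sqrt_mul_self,
    dotProduct_comm]

theorem sq_sum_mul_le_sum_abs_mul_sum_abs_mul_sq {ι : Type*} (s : Finset ι) (v a : ι → ℝ) :
    (∑ l ∈ s, v l * a l) ^ 2 ≤ (∑ l ∈ s, |v l|) * ∑ l ∈ s, |v l| * a l ^ 2 :=
  Finset.sum_sq_le_sum_mul_sum_of_sq_le_mul s (fun _ _ => abs_nonneg _)
    (fun _ _ => by positivity) fun l _ => by
      rw [← mul_assoc, ← sq, sq_abs, mul_pow]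

theorem sum_abs_pos_of_ne_zero {ι : Type*} [Fintype ι] {v : ι → ℝ} (hv : v ≠ 0) :
    0 < ∑ l, |v l| := by
  obtain ⟨l, hl⟩ := Function.ne_iff.mp hv
  exact Finset.sum_pos' (fun _ _ => abs_nonneg _) ⟨l, Finset.mem_univ _, abs_pos.mpr hl⟩

namespace Matrix

variable {m ι : Type*} [Fintype m] [Fintype ι]

theorem dotProduct_sum_smul_vecMulVec_mulVec {R : Type*} [CommRing R] (y : m → R) (w : ι → R)
    (c : ι → m → R) :
    y ⬝ᵥ (∑ l, w l • vecMulVec (c l) (c l)) *ᵥ y = ∑ l, w l * (c l ⬝ᵥ y) ^ 2 := by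
  simp only [sum_mulVec, smul_mulVec, vecMulVec_mulVec, dotProduct_sum, dotProduct_smul,
    op_smul_eq_smul, smul_eq_mul, dotProduct_comm y (c _)]
  exact Finset.sum_congr rfl fun l _ => by ring

theorem transpose_mul_self_mulVec_eq_sq_smul {M : Matrix m ι ℝ} {u : m → ℝ} {v : ι → ℝ} {σ : ℝ}
    (hMv : M *ᵥ v = σ • u) (huM : u ᵥ* M = σ • v) : (Mᵀ * M) *ᵥ v = σ ^ 2 • v := by
  rw [← mulVec_mulVec, hMv, mulVec_smul, mulVec_transpose, huM, smul_smul, sq]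

theorem sum_sq_ne_zero_of_vecMul_eq_smul {M : Matrix m ι ℝ} {u : m → ℝ} {v : ι → ℝ} {σ : ℝ}
    (huM : u ᵥ* M = σ • v) (hσ : σ ≠ 0) (hv : v ≠ 0) : ∑ t, ∑ q, M t q ^ 2 ≠ 0 := by
  intro h
  have hM : M = 0 := by
    rw [← trace_mul_conjTranspose_self_eq_zero_iff, ← h]
    simp [trace, mul_apply, sq]
  rw [hM, vecMul_zero, eq_comm, smul_eq_zero] at huM
  exact huM.elim hσ hv

theorem abs_mul_abs_div_le_sqrt_dotProduct_mulVec {c : ι → m → ℝ} {v : ι → ℝ} {μ : ℝ}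
    (hv : v ≠ 0) (hG : (of c * (of c)ᵀ) *ᵥ v = μ • v) (q : ι) :
    |μ| * |v q| / ∑ l, |v l| ≤
      √(c q ⬝ᵥ (∑ l, (|v l| / ∑ l', |v l'|) • vecMulVec (c l) (c l)) *ᵥ c q) := by
  set L := ∑ l, |v l|
  have hL : 0 < L := sum_abs_pos_of_ne_zero hv
  have hev : μ * v q = ∑ l, v l * (c l ⬝ᵥ c q) := by
    rw [← smul_eq_mul, ← Pi.smul_apply, ← hG]
    simp only [mulVec, dotProduct, mul_apply, transpose_apply, of_apply, mul_comm]
  rw [dotProduct_sum_smul_vecMulVec_mulVec]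
  apply Real.le_sqrt_of_sq_le
  calc (|μ| * |v q| / L) ^ 2 = (μ * v q) ^ 2 / L ^ 2 := by
        rw [div_pow, mul_pow, sq_abs, sq_abs, mul_pow]
    _ ≤ L * (∑ l, |v l| * (c l ⬝ᵥ c q) ^ 2) / L ^ 2 := by
      rw [hev]; gcongr; exact sq_sum_mul_le_sum_abs_mul_sum_abs_mul_sq _ _ _
    _ = ∑ l, |v l| / L * (c l ⬝ᵥ c q) ^ 2 := by
      rw [sq L, mul_div_mul_left _ _ hL.ne', Finset.sum_div]
      exact Finset.sum_congr rfl fun l _ => by ring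

theorem abs_le_sum_sqrt_dotProduct_mulVec {c : ι → m → ℝ} {v : ι → ℝ} {μ : ℝ}
    (hv : v ≠ 0) (hG : (of c * (of c)ᵀ) *ᵥ v = μ • v) :
    |μ| ≤ ∑ q, √(c q ⬝ᵥ (∑ l, (|v l| / ∑ l', |v l'|) • vecMulVec (c l) (c l)) *ᵥ c q) :=
  calc |μ| = ∑ q, |μ| * |v q| / ∑ l, |v l| := by
        rw [← Finset.sum_div, ← Finset.mul_sum,
          mul_div_cancel_right₀ _ (sum_abs_pos_of_ne_zero hv).ne']
    _ ≤ _ := Finset.sum_le_sum fun q _ => abs_mul_abs_div_le_sqrt_dotProduct_mulVec hv hG q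

end Matrix

theorem stmt5_general (n d : ℕ) (x : Fin n → Fin d → ℝ)
    (M : Matrix (Fin d) {q : Fin n × Fin n // q.1 < q.2} ℝ)
    (hM : ∀ q t, M t q = x q.1.1 t - x q.1.2 t)
    (σ : ℝ) (u : Fin d → ℝ) (v : {q : Fin n × Fin n // q.1 < q.2} → ℝ)
    (hv : v ⬝ᵥ v = 1)
    (hMv : M.mulVec v = σ • u) (huM : M.vecMul u = σ • v)
    (P : Matrix (Fin d) (Fin d) ℝ)
    (hPdef : P = ∑ q : {q : Fin n × Fin n // q.1 < q.2},
      (|v q| / ∑ q', |v q'|) • vecMulVec (x q.1.1 - x q.1.2) (x q.1.1 - x q.1.2))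
    (hP : P.PosSemidef)
    (srM : ℝ) (hsr : srM = (∑ t, ∑ q, M t q ^ 2) / σ ^ 2) :
    (∑ q : {q : Fin n × Fin n // q.1 < q.2},
        Real.sqrt (hP.sqrt.mulVec (x q.1.1 - x q.1.2) ⬝ᵥ
          hP.sqrt.mulVec (x q.1.1 - x q.1.2)) ≥ σ ^ 2) ∧
      σ ^ 2 = (1 / srM) * ∑ q : {q : Fin n × Fin n // q.1 < q.2},
        (x q.1.1 - x q.1.2) ⬝ᵥ (x q.1.1 - x q.1.2) := by
  set c : {q : Fin n × Fin n // q.1 < q.2} → Fin d → ℝ := fun q => x q.1.1 - x q.1.2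
  have hMc : M = (of c)ᵀ := ext fun t q => hM q t
  have hv0 : v ≠ 0 := by
    rintro rfl
    simp at hv
  have hG : (of c * (of c)ᵀ) *ᵥ v = σ ^ 2 • v := by
    simpa only [hMc, transpose_transpose] using transpose_mul_self_mulVec_eq_sq_smul hMv huM
  constructor
  · simp only [hP.sqrt_mulVec_dotProduct_self]
    subst hPdef
    rw [ge_iff_le, ← abs_of_nonneg (sq_nonneg σ)]
    exact abs_le_sum_sqrt_dotProduct_mulVec hv0 hG
  · have hF : ∑ t, ∑ q, M t q ^ 2 = ∑ q, c q ⬝ᵥ c q := by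
      rw [Finset.sum_comm]
      simp only [hM, dotProduct, sq, c, Pi.sub_apply]
    rcases eq_or_ne σ 0 with rfl | hσ
    · simp [hsr]
    · rw [hsr, ← hF, one_div_div,
        div_mul_cancel₀ _ (sum_sq_ne_zero_of_vecMul_eq_smul huM hσ hv0)]

/-- With `P = Σ_{k<l} (|v_{kl}|/‖v‖₁)(xₖ−xₗ)(xₖ−xₗ)ᵀ` built from the top right singular
vector `v` of the difference matrix `M`, the embedding `xᵢ ↦ P^{1/2}xᵢ` has total spread at
least `σ₁(M)² = (1/sr(M)) Σ_{i<j} ‖xᵢ−xⱼ‖²`. -/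
theorem stmt5 (n d : ℕ) (x : Fin n → Fin d → ℝ)
    (htri : ∀ i j k, (x i - x j) ⬝ᵥ (x i - x j) + (x j - x k) ⬝ᵥ (x j - x k) ≥
      (x i - x k) ⬝ᵥ (x i - x k))
    (M : Matrix (Fin d) {q : Fin n × Fin n // q.1 < q.2} ℝ)
    (hM : ∀ q t, M t q = x q.1.1 t - x q.1.2 t)
    (σ : ℝ) (u : Fin d → ℝ) (v : {q : Fin n × Fin n // q.1 < q.2} → ℝ)
    (hσ : 0 < σ) (hu : u ⬝ᵥ u = 1) (hv : v ⬝ᵥ v = 1)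
    (hMv : M.mulVec v = σ • u) (huM : M.vecMul u = σ • v)
    (htop : ∀ w, Real.sqrt (M.mulVec w ⬝ᵥ M.mulVec w) ≤ σ * Real.sqrt (w ⬝ᵥ w))
    (P : Matrix (Fin d) (Fin d) ℝ)
    (hPdef : P = ∑ q : {q : Fin n × Fin n // q.1 < q.2},
      (|v q| / ∑ q', |v q'|) • vecMulVec (x q.1.1 - x q.1.2) (x q.1.1 - x q.1.2))
    (hP : P.PosSemidef)
    (srM : ℝ) (hsr : srM = (∑ t, ∑ q, M t q ^ 2) / σ ^ 2) :
    (∑ q : {q : Fin n × Fin n // q.1 < q.2},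
        Real.sqrt (hP.sqrt.mulVec (x q.1.1 - x q.1.2) ⬝ᵥ
          hP.sqrt.mulVec (x q.1.1 - x q.1.2)) ≥ σ ^ 2) ∧
      σ ^ 2 = (1 / srM) * ∑ q : {q : Fin n × Fin n // q.1 < q.2},
        (x q.1.1 - x q.1.2) ⬝ᵥ (x q.1.1 - x q.1.2) :=
  stmt5_general n d x M hM σ u v hv hMv huM P hPdef hP srM hsr
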